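/- arXiv:2306.03670 — 6 statements merged into one kernel-verified Lean document; each statement's English description precedes it below -/
import Mathlib

section
/- Let A : X → Y be a linear map between finite-dimensional inner product spaces, y ∈ Y, and let x_𝒦 minimize ‖Ax−y‖ over the Krylov space 𝒦ⁿ = span{b, 𝒜b, …, 𝒜^{n−1}b} (with 𝒜=A*A, b=A*y) and x_ℛ minimize ‖Ax−y‖ over the rational Krylov space ℛⁿ = span{(𝒜+αᵢI)⁻¹b : i≤n}. Then ‖A x_ℛ − y‖ ≤ ‖A x_𝒦 − y‖. -/
open Polynomial ContinuousLinearMap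

private lemma krylov_intertwine {X Y : Type*} [NormedAddCommGroup X] [InnerProductSpace ℝ X]
    [NormedAddCommGroup Y] [InnerProductSpace ℝ Y]
    (A : X →L[ℝ] Y) (T : X →L[ℝ] X) (S : Y →L[ℝ] Y) (h : ∀ x, S (A x) = A (T x))
    (f : Polynomial ℝ) : ∀ x, (Polynomial.aeval S f) (A x) = A ((Polynomial.aeval T f) x) := by
  induction f using Polynomial.induction_on with
  | C a =>
      intro x
      simp [Polynomial.aeval_C, Algebra.algebraMap_eq_smul_one]
  | add p q hp hq =>
      intro x
      simp [map_add, ContinuousLinearMap.add_apply, hp x, hq x]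
  | monomial k a ih =>
      intro x
      simp only [map_mul, pow_succ, Polynomial.aeval_X,
        ContinuousLinearMap.mul_apply] at ih ⊢
      rw [h x, ih (T x)]

private lemma krylov_pow_inner_nonneg {X Y : Type*} [NormedAddCommGroup X]
    [InnerProductSpace ℝ X] [FiniteDimensional ℝ X] [NormedAddCommGroup Y]
    [InnerProductSpace ℝ Y] [FiniteDimensional ℝ Y]
    (A : X →L[ℝ] Y) (k : ℕ) (u : Y) :
    0 ≤ (inner ℝ (((A.comp (ContinuousLinearMap.adjoint A)) ^ k) u) u : ℝ) := by
  set B : Y →L[ℝ] Y := A.comp (ContinuousLinearMap.adjoint A) with hBdef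
  have hB : ContinuousLinearMap.adjoint B = B := by
    rw [hBdef, ContinuousLinearMap.adjoint_comp, ContinuousLinearMap.adjoint_adjoint]
  have hBsa : IsSelfAdjoint B := ContinuousLinearMap.isSelfAdjoint_iff'.mpr hB
  have hBm : ∀ m : ℕ, ContinuousLinearMap.adjoint (B ^ m) = B ^ m := fun m =>
    ContinuousLinearMap.isSelfAdjoint_iff'.mp (hBsa.pow m)
  rcases Nat.even_or_odd k with ⟨m, hm⟩ | ⟨m, hm⟩
  · subst hm
    have h1 : (B ^ (m + m)) u = (B ^ m) ((B ^ m) u) := by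
      rw [pow_add, ContinuousLinearMap.mul_apply]
    rw [h1]
    nth_rewrite 1 [← hBm m]
    rw [ContinuousLinearMap.adjoint_inner_left]
    exact real_inner_self_nonneg
  · subst hm
    have h1 : B ^ (2 * m + 1) = B ^ m * (B * B ^ m) := by
      rw [← pow_succ', ← pow_add]
      congr 1
      omega
    rw [h1, ContinuousLinearMap.mul_apply]
    nth_rewrite 1 [← hBm m]
    rw [ContinuousLinearMap.adjoint_inner_left, ContinuousLinearMap.mul_apply, hBdef,
      ContinuousLinearMap.comp_apply, ← ContinuousLinearMap.adjoint_inner_right]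
    exact real_inner_self_nonneg

/-- The least-squares residual of the minimizer over the rational Krylov
space ℛⁿ is at most the residual of the minimizer over the polynomial Krylov space 𝒦ⁿ. -/
theorem stmt_5 {X Y : Type*} [NormedAddCommGroup X] [InnerProductSpace ℝ X]
    [FiniteDimensional ℝ X] [NormedAddCommGroup Y] [InnerProductSpace ℝ Y]
    [FiniteDimensional ℝ Y]
    (A : X →L[ℝ] Y) (y : Y) (n : ℕ) (hn : 0 < n)
    (α : Fin n → ℝ) (hpos : ∀ i, 0 < α i) (hdist : Function.Injective α)
    (𝒜 : X →L[ℝ] X) (h𝒜 : 𝒜 = (ContinuousLinearMap.adjoint A).comp A)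
    (b : X) (hb : b = ContinuousLinearMap.adjoint A y)
    (hbij : ∀ i, Function.Bijective (𝒜 + α i • (1 : X →L[ℝ] X)))
    (xK : X) (hxKmem : xK ∈ Submodule.span ℝ {v : X | ∃ i < n, v = (𝒜 ^ i) b})
    (hxKmin : ∀ x ∈ Submodule.span ℝ {v : X | ∃ i < n, v = (𝒜 ^ i) b},
      ‖A xK - y‖ ≤ ‖A x - y‖)
    (xR : X)
    (hxRmem : xR ∈ Submodule.span ℝ {v : X | ∃ i, (𝒜 + α i • (1 : X →L[ℝ] X)) v = b})
    (hxRmin : ∀ x ∈ Submodule.span ℝ {v : X | ∃ i, (𝒜 + α i • (1 : X →L[ℝ] X)) v = b},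
      ‖A xR - y‖ ≤ ‖A x - y‖) :
    ‖A xR - y‖ ≤ ‖A xK - y‖ := by
  classical
  -- nodes
  set v : Fin n → ℝ := fun i => -(α i) with hv
  set q : Polynomial ℝ := ∏ i : Fin n, (Polynomial.X - Polynomial.C (v i)) with hq
  set q0 : ℝ := ∏ i : Fin n, α i with hq0
  have hq0pos : 0 < q0 := Finset.prod_pos fun i _ => hpos i
  have hq_alt : q = ∏ i : Fin n, (Polynomial.X + Polynomial.C (α i)) := by
    refine Finset.prod_congr rfl fun i _ => ?_
    rw [hv]
    simp [sub_neg_eq_add]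
  -- the shifted operators as polynomial evaluations
  have haevalfac : ∀ i : Fin n,
      Polynomial.aeval 𝒜 (Polynomial.X - Polynomial.C (v i)) = 𝒜 + α i • (1 : X →L[ℝ] X) := by
    intro i
    rw [map_sub, Polynomial.aeval_X, Polynomial.aeval_C, Algebra.algebraMap_eq_smul_one, hv]
    simp [sub_neg_eq_add]
  -- coefficients of q are nonnegative
  have hqcoeff : ∀ k, 0 ≤ q.coeff k := by
    rw [hq_alt]
    refine Finset.prod_induction _ (fun f : Polynomial ℝ => ∀ k, 0 ≤ f.coeff k) ?_ ?_ ?_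
    · intro f g hf hg k
      rw [Polynomial.coeff_mul]
      exact Finset.sum_nonneg fun x _ => mul_nonneg (hf x.1) (hg x.2)
    · intro k
      rw [Polynomial.coeff_one]
      split_ifs <;> norm_num
    · intro i _ k
      rw [Polynomial.coeff_add]
      rcases eq_or_ne k 0 with rfl | hk
      · simp [Polynomial.coeff_X_zero, Polynomial.coeff_C, (hpos i).le]
      · rcases eq_or_ne k 1 with rfl | hk1
        · simp [Polynomial.coeff_C]
        · simp [Polynomial.coeff_X, Polynomial.coeff_C, hk, hk1, Ne.symm hk1]
  have hqc0 : q.coeff 0 = q0 := by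
    rw [Polynomial.coeff_zero_eq_eval_zero, hq, Polynomial.eval_prod, hq0]
    refine Finset.prod_congr rfl fun i _ => ?_
    simp [hv]
  -- natDegree of q
  have hqdeg : q.natDegree = n := by
    rw [hq, Polynomial.natDegree_prod _ _ (fun i _ => Polynomial.X_sub_C_ne_zero (v i))]
    simp
  -- q(𝒜) is surjective; choose w with q(𝒜) w = b
  have hQsurj : Function.Surjective (Polynomial.aeval 𝒜 q) := by
    rw [hq]
    have : ∀ s : Finset (Fin n), Function.Surjective
        (Polynomial.aeval 𝒜 (∏ i ∈ s, (Polynomial.X - Polynomial.C (v i)))) := by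
      intro s
      induction s using Finset.induction with
      | empty =>
          simp only [Finset.prod_empty, map_one]
          exact Function.surjective_id
      | @insert a s ha ih =>
          rw [Finset.prod_insert ha, map_mul, ContinuousLinearMap.mul_def]
          have h1 : Function.Surjective (Polynomial.aeval 𝒜
              (Polynomial.X - Polynomial.C (v a))) := by
            rw [haevalfac a]
            exact (hbij a).2
          rw [ContinuousLinearMap.coe_comp']
          exact h1.comp ih
    exact this Finset.univ
  obtain ⟨w, hw⟩ := hQsurj b
  -- extract a polynomial p with xK = p(𝒜) b
  have hPoly : ∀ z, z ∈ Submodule.span ℝ {u : X | ∃ i < n, u = (𝒜 ^ i) b} →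
      ∃ p : Polynomial ℝ, p.degree < (n : WithBot ℕ) ∧ z = (Polynomial.aeval 𝒜 p) b := by
    intro z hz
    induction hz using Submodule.span_induction with
    | mem x hx =>
        obtain ⟨i, hi, rfl⟩ := hx
        exact ⟨Polynomial.X ^ i, by
          rw [Polynomial.degree_X_pow]; exact_mod_cast hi, by simp⟩
    | zero => exact ⟨0, by simp only [Polynomial.degree_zero]; exact WithBot.bot_lt_coe n, by simp⟩
    | add x₁ x₂ hx₁ hx₂ ih₁ ih₂ =>
        obtain ⟨p₁, hd₁, rfl⟩ := ih₁
        obtain ⟨p₂, hd₂, rfl⟩ := ih₂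
        exact ⟨p₁ + p₂, (Polynomial.degree_add_le _ _).trans_lt (max_lt hd₁ hd₂), by simp⟩
    | smul c x₁ hx₁ ih =>
        obtain ⟨p₁, hd₁, rfl⟩ := ih
        exact ⟨c • p₁, (Polynomial.degree_smul_le _ _).trans_lt hd₁, by simp⟩
  obtain ⟨p, hpdeg, hpdef⟩ := hPoly xK hxKmem
  -- write q - q0 = X * r
  obtain ⟨r, hr⟩ : (Polynomial.X : Polynomial ℝ) ∣ (q - Polynomial.C q0) :=
    Polynomial.X_dvd_iff.mpr (by simp [hqc0])
  have hqX : q = Polynomial.X * r + Polynomial.C q0 := by rw [← hr]; ring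
  -- degree bounds
  have hrdeg : r.degree < (n : WithBot ℕ) := by
    rcases eq_or_ne r 0 with rfl | h0
    · simp only [Polynomial.degree_zero]
      exact WithBot.bot_lt_coe n
    · have h1 : (Polynomial.X * r).natDegree ≤ n := by
        rw [← hr]
        refine (Polynomial.natDegree_sub_le _ _).trans ?_
        simp [hqdeg]
      have h2 : (Polynomial.X * r).natDegree = 1 + r.natDegree := by
        rw [Polynomial.natDegree_mul Polynomial.X_ne_zero h0, Polynomial.natDegree_X]
      rw [Polynomial.degree_eq_natDegree h0]
      exact_mod_cast by omega
  set sPoly : Polynomial ℝ := r + Polynomial.C q0 * p with hsPolydef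
  have hsdeg : sPoly.degree < (n : WithBot ℕ) := by
    refine (Polynomial.degree_add_le _ _).trans_lt (max_lt hrdeg ?_)
    refine (Polynomial.degree_mul_le _ _).trans_lt ?_
    calc (Polynomial.C q0).degree + p.degree ≤ 0 + p.degree :=
          add_le_add Polynomial.degree_C_le le_rfl
      _ = p.degree := zero_add _
      _ < n := hpdeg
  set x' : X := (Polynomial.aeval 𝒜 sPoly) w with hx'def
  -- membership of x' in the rational Krylov space
  have hvInj : Set.InjOn v (Finset.univ : Finset (Fin n)) := by
    intro i _ j _ hij
    exact hdist (neg_injective hij)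
  have hui : ∀ i : Fin n, (𝒜 + α i • (1 : X →L[ℝ] X))
      ((Polynomial.aeval 𝒜 (∏ j ∈ Finset.univ.erase i,
        (Polynomial.X - Polynomial.C (v j)))) w) = b := by
    intro i
    have hfac : (Polynomial.X - Polynomial.C (v i)) * (∏ j ∈ Finset.univ.erase i,
        (Polynomial.X - Polynomial.C (v j))) = q := by
      rw [hq]
      exact Finset.mul_prod_erase Finset.univ (fun j => Polynomial.X - Polynomial.C (v j)) (Finset.mem_univ i)
    calc (𝒜 + α i • (1 : X →L[ℝ] X)) ((Polynomial.aeval 𝒜 (∏ j ∈ Finset.univ.erase i,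
            (Polynomial.X - Polynomial.C (v j)))) w)
        = (Polynomial.aeval 𝒜 ((Polynomial.X - Polynomial.C (v i)) *
            ∏ j ∈ Finset.univ.erase i, (Polynomial.X - Polynomial.C (v j)))) w := by
          rw [map_mul, ContinuousLinearMap.mul_apply, haevalfac i]
      _ = b := by rw [hfac, hw]
  have hx'mem : x' ∈ Submodule.span ℝ {u : X | ∃ i, (𝒜 + α i • (1 : X →L[ℝ] X)) u = b} := by
    have hcard : ((Finset.univ : Finset (Fin n)).card : WithBot ℕ) = (n : WithBot ℕ) := by
      simp
    have hs := Lagrange.eq_interpolate (f := sPoly) (v := v) hvInj (by rw [hcard]; exact hsdeg)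
    have hx'sum : x' = ∑ i : Fin n, (sPoly.eval (v i)) •
        (Polynomial.aeval 𝒜 (Lagrange.basis Finset.univ v i)) w := by
      conv_lhs => rw [hx'def, hs]
      rw [Lagrange.interpolate_apply, map_sum, ContinuousLinearMap.sum_apply]
      refine Finset.sum_congr rfl fun i _ => ?_
      rw [map_mul, Polynomial.aeval_C, ← Algebra.smul_def, ContinuousLinearMap.smul_apply]
    rw [hx'sum]
    refine Submodule.sum_mem _ fun i _ => Submodule.smul_mem _ _ ?_
    have hbasis : Lagrange.basis Finset.univ v i
        = Polynomial.C (∏ j ∈ Finset.univ.erase i, ((v i - v j)⁻¹)) *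
          ∏ j ∈ Finset.univ.erase i, (Polynomial.X - Polynomial.C (v j)) := by
      rw [Lagrange.basis]
      simp_rw [Lagrange.basisDivisor]
      rw [Finset.prod_mul_distrib, ← map_prod]
    rw [hbasis, map_mul, Polynomial.aeval_C, ← Algebra.smul_def, ContinuousLinearMap.smul_apply]
    exact Submodule.smul_mem _ _ (Submodule.subset_span ⟨i, hui i⟩)
  -- the operator B = A A* and intertwining
  set B : Y →L[ℝ] Y := A.comp (ContinuousLinearMap.adjoint A) with hB
  have hcommAB : ∀ x : X, B (A x) = A (𝒜 x) := by
    intro x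
    rw [hB, h𝒜]
    simp [ContinuousLinearMap.comp_apply]
  have hcomm : ∀ f (z : X), (Polynomial.aeval B f) (A z) = A ((Polynomial.aeval 𝒜 f) z) :=
    fun f z => krylov_intertwine A 𝒜 B hcommAB f z
  -- residual identity
  have hres : (Polynomial.aeval B q) (A x' - y) = q0 • (A xK - y) := by
    have e1 : (Polynomial.aeval B q) (A x')
        = A ((Polynomial.aeval 𝒜 r) b) + q0 • A xK := by
      rw [hx'def, hcomm q]
      have hcompose : (Polynomial.aeval 𝒜 q) ((Polynomial.aeval 𝒜 sPoly) w)
          = (Polynomial.aeval 𝒜 (q * sPoly)) w := by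
        rw [map_mul, ContinuousLinearMap.mul_apply]
      rw [hcompose]
      have hqs : q * sPoly = r * q + Polynomial.C q0 * (p * q) := by
        rw [hsPolydef]; ring
      rw [hqs, map_add, ContinuousLinearMap.add_apply, map_mul,
        ContinuousLinearMap.mul_apply, hw, map_mul, Polynomial.aeval_C, ← Algebra.smul_def,
        ContinuousLinearMap.smul_apply, map_mul, ContinuousLinearMap.mul_apply, hw, ← hpdef,
        map_add, map_smul]
    have e2 : (Polynomial.aeval B q) y = A ((Polynomial.aeval 𝒜 r) b) + q0 • y := by
      have hBy : B y = A b := by rw [hB, hb]; rfl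
      have hxr : (Polynomial.X : Polynomial ℝ) * r = r * Polynomial.X := by ring
      rw [hqX, map_add, ContinuousLinearMap.add_apply, hxr, map_mul, Polynomial.aeval_X,
        ContinuousLinearMap.mul_apply, hBy, hcomm r, Polynomial.aeval_C,
        Algebra.algebraMap_eq_smul_one, ContinuousLinearMap.smul_apply,
        ContinuousLinearMap.one_apply]
    rw [map_sub, e1, e2, smul_sub]
    abel
  -- coercivity of q(B)
  have hposq : ∀ u : Y, q0 * ‖u‖ ≤ ‖(Polynomial.aeval B q) u‖ := by
    intro u
    rcases eq_or_ne u 0 with rfl | hu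
    · simp
    have hupos : 0 < ‖u‖ := norm_pos_iff.mpr hu
    have hinner : q0 * ‖u‖ ^ 2 ≤ (inner ℝ ((Polynomial.aeval B q) u) u : ℝ) := by
      rw [Polynomial.aeval_eq_sum_range, ContinuousLinearMap.sum_apply, sum_inner]
      have hterm : ∀ k ∈ Finset.range (q.natDegree + 1),
          (0:ℝ) ≤ inner ℝ ((q.coeff k • B ^ k) u) u := by
        intro k _
        rw [ContinuousLinearMap.smul_apply, real_inner_smul_left]
        exact mul_nonneg (hqcoeff k) (krylov_pow_inner_nonneg A k u)
      have h0mem : 0 ∈ Finset.range (q.natDegree + 1) := Finset.mem_range.mpr (Nat.succ_pos _)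
      calc q0 * ‖u‖ ^ 2 = (inner ℝ ((q.coeff 0 • B ^ 0) u) u : ℝ) := by
            rw [ContinuousLinearMap.smul_apply, real_inner_smul_left, hqc0, pow_zero,
              ContinuousLinearMap.one_apply, real_inner_self_eq_norm_sq]
        _ ≤ ∑ k ∈ Finset.range (q.natDegree + 1), (inner ℝ ((q.coeff k • B ^ k) u) u : ℝ) :=
            Finset.single_le_sum hterm h0mem
    have h2 : q0 * ‖u‖ ^ 2 ≤ ‖(Polynomial.aeval B q) u‖ * ‖u‖ :=
      hinner.trans (real_inner_le_norm _ _)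
    refine le_of_mul_le_mul_right ?_ hupos
    calc q0 * ‖u‖ * ‖u‖ = q0 * ‖u‖ ^ 2 := by ring
      _ ≤ ‖(Polynomial.aeval B q) u‖ * ‖u‖ := h2
  -- conclude
  have hfin : ‖A x' - y‖ ≤ ‖A xK - y‖ := by
    have h1 := hposq (A x' - y)
    rw [hres, norm_smul, Real.norm_eq_abs, abs_of_pos hq0pos] at h1
    exact le_of_mul_le_mul_left h1 hq0pos
  exact (hxRmin x' hx'mem).trans hfin
end

section
/- With notation as in the residual comparison, ‖A x_𝒦 − y‖ ≤ ∏_{i=1}^{n}(‖AA*‖/αᵢ + 1) · ‖A x_ℛ − y‖, where x_𝒦 and x_ℛ are the least-squares minimizers over the polynomial Krylov space 𝒦ⁿ and the rational Krylov space ℛⁿ respectively. -/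
open Polynomial

section Aux

variable {X Y : Type*} [NormedAddCommGroup X] [InnerProductSpace ℝ X]
    [NormedAddCommGroup Y] [InnerProductSpace ℝ Y]

private lemma aux_pow_comm (A : X →L[ℝ] Y) (𝒜 : X →L[ℝ] X) (B : Y →L[ℝ] Y)
    (h : A.comp 𝒜 = B.comp A) (k : ℕ) (x : X) :
    A ((𝒜 ^ k) x) = (B ^ k) (A x) := by
  induction k generalizing x with
  | zero => simp
  | succ k ih =>
      have h' : A (𝒜 x) = B (A x) := congrFun (congrArg DFunLike.coe h) x
      rw [pow_succ, pow_succ]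
      simp only [ContinuousLinearMap.mul_apply]
      rw [ih (𝒜 x), h']

private lemma aux_comm (A : X →L[ℝ] Y) (𝒜 : X →L[ℝ] X) (B : Y →L[ℝ] Y)
    (h : A.comp 𝒜 = B.comp A) (p : ℝ[X]) (x : X) :
    A ((aeval 𝒜 p) x) = (aeval B p) (A x) := by
  induction p using Polynomial.induction_on' with
  | add p q hp hq =>
      simp only [map_add, ContinuousLinearMap.add_apply] at *
      rw [hp, hq]
  | monomial k c =>
      simp only [aeval_monomial, Algebra.algebraMap_eq_smul_one,
        ContinuousLinearMap.mul_apply, ContinuousLinearMap.smul_apply,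
        ContinuousLinearMap.one_apply, map_smul]
      rw [aux_pow_comm A 𝒜 B h k x]

private lemma aux_norm (B : Y →L[ℝ] Y) {n : ℕ} (α : Fin n → ℝ) (hpos : ∀ i, 0 < α i)
    (s : Finset (Fin n)) (r : Y) :
    ‖(aeval B (∏ i ∈ s, (C (α i)⁻¹ * Polynomial.X + 1))) r‖ ≤
      (∏ i ∈ s, (‖B‖ / α i + 1)) * ‖r‖ := by
  induction s using Finset.induction generalizing r with
  | empty => simp
  | @insert j s hj ih =>
      rw [Finset.prod_insert hj, mul_comm, map_mul]
      have h1 : ((aeval B) (C (α j)⁻¹ * Polynomial.X + 1)) r = (α j)⁻¹ • B r + r := by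
        simp [Algebra.algebraMap_eq_smul_one]
      have h2 : ‖(α j)⁻¹ • B r + r‖ ≤ (‖B‖ / α j + 1) * ‖r‖ := by
        calc ‖(α j)⁻¹ • B r + r‖ ≤ ‖(α j)⁻¹ • B r‖ + ‖r‖ := norm_add_le _ _
        _ ≤ (α j)⁻¹ * (‖B‖ * ‖r‖) + ‖r‖ := by
            rw [norm_smul, Real.norm_eq_abs, abs_of_pos (inv_pos.mpr (hpos j))]
            have h := B.le_opNorm r
            have h' := (inv_pos.mpr (hpos j)).le
            nlinarith
        _ = (‖B‖ / α j + 1) * ‖r‖ := by field_simp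
      calc ‖((aeval B) (∏ i ∈ s, (C (α i)⁻¹ * Polynomial.X + 1)) *
              (aeval B) (C (α j)⁻¹ * Polynomial.X + 1)) r‖
          = ‖((aeval B) (∏ i ∈ s, (C (α i)⁻¹ * Polynomial.X + 1)))
              (((aeval B) (C (α j)⁻¹ * Polynomial.X + 1)) r)‖ := rfl
        _ ≤ (∏ i ∈ s, (‖B‖ / α i + 1)) * ‖((aeval B) (C (α j)⁻¹ * Polynomial.X + 1)) r‖ :=
            ih _
        _ ≤ (∏ i ∈ s, (‖B‖ / α i + 1)) * ((‖B‖ / α j + 1) * ‖r‖) := by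
            rw [h1]
            refine mul_le_mul_of_nonneg_left h2 ?_
            refine Finset.prod_nonneg fun i _ => ?_
            have := (hpos i).le
            positivity
        _ = (∏ i ∈ insert j s, (‖B‖ / α i + 1)) * ‖r‖ := by
            rw [Finset.prod_insert hj]; ring

private lemma aux_mem (𝒜 : X →L[ℝ] X) (b : X) (n : ℕ) (p : ℝ[X]) (hdeg : p.natDegree < n) :
    (aeval 𝒜 p) b ∈ Submodule.span ℝ {v : X | ∃ i < n, v = (𝒜 ^ i) b} := by
  rw [Polynomial.aeval_eq_sum_range]
  simp only [ContinuousLinearMap.coe_sum', Finset.sum_apply, ContinuousLinearMap.smul_apply]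
  refine Submodule.sum_mem _ fun i hi => ?_
  refine Submodule.smul_mem _ _ (Submodule.subset_span ?_)
  exact ⟨i, lt_of_lt_of_le (Finset.mem_range.mp hi) hdeg, rfl⟩

end Aux

/-- Reverse residual comparison:
‖A x_𝒦 − y‖ ≤ ∏_{i=1}^{n}(‖AA*‖/αᵢ + 1) · ‖A x_ℛ − y‖. -/
theorem stmt_6 {X Y : Type*} [NormedAddCommGroup X] [InnerProductSpace ℝ X]
    [FiniteDimensional ℝ X] [NormedAddCommGroup Y] [InnerProductSpace ℝ Y]
    [FiniteDimensional ℝ Y]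
    (A : X →L[ℝ] Y) (y : Y) (n : ℕ) (hn : 0 < n)
    (α : Fin n → ℝ) (hpos : ∀ i, 0 < α i) (hdist : Function.Injective α)
    (𝒜 : X →L[ℝ] X) (h𝒜 : 𝒜 = (ContinuousLinearMap.adjoint A).comp A)
    (b : X) (hb : b = ContinuousLinearMap.adjoint A y)
    (hbij : ∀ i, Function.Bijective (𝒜 + α i • (1 : X →L[ℝ] X)))
    (xK : X) (hxKmem : xK ∈ Submodule.span ℝ {v : X | ∃ i < n, v = (𝒜 ^ i) b})
    (hxKmin : ∀ x ∈ Submodule.span ℝ {v : X | ∃ i < n, v = (𝒜 ^ i) b},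
      ‖A xK - y‖ ≤ ‖A x - y‖)
    (xR : X)
    (hxRmem : xR ∈ Submodule.span ℝ {v : X | ∃ i, (𝒜 + α i • (1 : X →L[ℝ] X)) v = b})
    (hxRmin : ∀ x ∈ Submodule.span ℝ {v : X | ∃ i, (𝒜 + α i • (1 : X →L[ℝ] X)) v = b},
      ‖A xR - y‖ ≤ ‖A x - y‖) :
    ‖A xK - y‖ ≤
      (∏ i, (‖A.comp (ContinuousLinearMap.adjoint A)‖ / α i + 1)) * ‖A xR - y‖ := by
  classical
  set B : Y →L[ℝ] Y := A.comp (ContinuousLinearMap.adjoint A) with hB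
  have hcomm : A.comp 𝒜 = B.comp A := by
    rw [h𝒜, hB, ← ContinuousLinearMap.comp_assoc]
  set f : Fin n → ℝ[X] := fun i => C (α i)⁻¹ * Polynomial.X + 1 with hf
  set p : ℝ[X] := ∏ i, f i with hp
  set q : ℝ[X] := (p - 1).divX with hq
  -- degree facts
  have hdegf : ∀ i, (f i).natDegree ≤ 1 := by
    intro i
    rw [hf]
    refine (natDegree_add_le _ _).trans (max_le ?_ ?_)
    · exact (natDegree_C_mul_le _ _).trans natDegree_X_le
    · simp
  have hdegp : p.natDegree ≤ n := by
    calc p.natDegree ≤ ∑ i, (f i).natDegree := Polynomial.natDegree_prod_le _ _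
    _ ≤ ∑ _i : Fin n, 1 := Finset.sum_le_sum fun i _ => hdegf i
    _ = n := by simp
  have hdegq : q.natDegree < n := by
    rw [hq, natDegree_divX_eq_natDegree_tsub_one]
    have h1 : (p - 1).natDegree ≤ n := by
      refine le_trans (natDegree_sub_le _ _) ?_
      simp [hdegp]
    omega
  -- coeff 0 of p is 1
  have hp0 : p.coeff 0 = 1 := by
    rw [coeff_zero_eq_eval_zero, hp, Polynomial.eval_prod]
    simp [hf]
  have hXq : Polynomial.X * q = p - 1 := by
    have := X_mul_divX_add (p - 1)
    rw [← this]
    simp [hp0, hq]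
  -- the comparison element
  set x : X := (aeval 𝒜 p) xR - (aeval 𝒜 q) b with hx
  have hxmem : x ∈ Submodule.span ℝ {v : X | ∃ i < n, v = (𝒜 ^ i) b} := by
    refine Submodule.sub_mem _ ?_ (aux_mem 𝒜 b n q hdegq)
    refine Submodule.span_induction (p := fun v _ => (aeval 𝒜 p) v ∈
      Submodule.span ℝ {v : X | ∃ i < n, v = (𝒜 ^ i) b}) ?_ (by simp) ?_ ?_ hxRmem
    · rintro v ⟨j, hjv⟩
      have hsplit : p = (∏ i ∈ Finset.univ.erase j, f i) * f j := by
        rw [hp, mul_comm, Finset.mul_prod_erase _ _ (Finset.mem_univ j)]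
      have hfv : (aeval 𝒜 (f j)) v = (α j)⁻¹ • b := by
        rw [hf]
        simp only [map_add, map_mul, aeval_C, aeval_X, map_one,
          ContinuousLinearMap.add_apply, ContinuousLinearMap.mul_apply,
          ContinuousLinearMap.one_apply, Algebra.algebraMap_eq_smul_one,
          ContinuousLinearMap.smul_apply]
        rw [← hjv]
        simp only [ContinuousLinearMap.add_apply, ContinuousLinearMap.smul_apply,
          ContinuousLinearMap.one_apply, smul_add, smul_smul,
          inv_mul_cancel₀ (hpos j).ne', one_smul]
      have hdegsplit : (∏ i ∈ Finset.univ.erase j, f i).natDegree < n := by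
        calc (∏ i ∈ Finset.univ.erase j, f i).natDegree
            ≤ ∑ i ∈ Finset.univ.erase j, (f i).natDegree := Polynomial.natDegree_prod_le _ _
          _ ≤ ∑ _i ∈ Finset.univ.erase j, 1 := Finset.sum_le_sum fun i _ => hdegf i
          _ = n - 1 := by simp [Finset.card_erase_of_mem]
          _ < n := by omega
      rw [hsplit, map_mul]
      have : ((aeval 𝒜) (∏ i ∈ Finset.univ.erase j, f i) * (aeval 𝒜) (f j)) v
          = ((aeval 𝒜) (∏ i ∈ Finset.univ.erase j, f i)) (((aeval 𝒜) (f j)) v) := rfl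
      rw [this, hfv, map_smul]
      exact Submodule.smul_mem _ _ (aux_mem 𝒜 b n _ hdegsplit)
    · intro u v _ _ hu hv
      rw [map_add]; exact Submodule.add_mem _ hu hv
    · intro c u _ hu
      rw [map_smul]; exact Submodule.smul_mem _ _ hu
  -- residual identity
  have hAb : A b = B y := by rw [hb]; rfl
  have hres : A x - y = (aeval B p) (A xR - y) := by
    have h1 : A ((aeval 𝒜 p) xR) = (aeval B p) (A xR) := aux_comm A 𝒜 B hcomm p xR
    have h2 : A ((aeval 𝒜 q) b) = (aeval B q) (B y) := by
      rw [aux_comm A 𝒜 B hcomm q b, hAb]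
    have h3 : (aeval B q) (B y) = (aeval B p) y - y := by
      have : ((aeval B) (Polynomial.X * q)) y = (aeval B q) (B y) := by
        rw [mul_comm, map_mul, ContinuousLinearMap.mul_apply, aeval_X]
      rw [← this, hXq, map_sub, map_one, ContinuousLinearMap.sub_apply,
        ContinuousLinearMap.one_apply]
    rw [hx, map_sub, h1, h2, h3, map_sub]
    abel
  calc ‖A xK - y‖ ≤ ‖A x - y‖ := hxKmin x hxmem
    _ = ‖(aeval B p) (A xR - y)‖ := by rw [hres]
    _ ≤ (∏ i, (‖B‖ / α i + 1)) * ‖A xR - y‖ := by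
        rw [hp, hf]; exact aux_norm B α hpos Finset.univ (A xR - y)
    _ = (∏ i, (‖A.comp (ContinuousLinearMap.adjoint A)‖ / α i + 1)) * ‖A xR - y‖ := by
        rw [hB]
end

section
/- The search directions p_n = Q_n T_n⁻¹ e_n of the rational Lanczos method satisfy the conjugacy relations ⟨𝒜 p_n, p_k⟩ = 0 for all n ≠ k. -/
/-!
Write `p_n = ∑_{j<n} d_j q_{j+1}` with `T_n d = e_n`. Row `i` of this system says
`⟨q_{i+1}, 𝒜 p_n⟩ = 0` for `i + 1 < n`, i.e. `𝒜 p_n ⊥ q_1, …, q_{n-1}`. For `k < n` the vector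
`p_k` lies in the span of `q_1, …, q_k`, so `⟨𝒜 p_n, p_k⟩ = 0`; the case `k > n` follows by
symmetry of `𝒜`.
-/

open Finset

section

variable {X : Type*} [NormedAddCommGroup X] [InnerProductSpace ℝ X]

/-- `v = Q_n T_n⁻¹ e_n`, where `Q_n = [q₁ ⋯ q_n]` and `T_n = Q_nᵀ 𝒜 Q_n`, written without
inverting `T_n`: `v = Q_n d` for a solution `d` of `T_n d = e_n`. -/
def IsLanczosDirection (𝒜 : Module.End ℝ X) (q : ℕ → X) (n : ℕ) (v : X) : Prop :=
  ∃ d : Fin n → ℝ,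
    (∀ i : Fin n, ∑ j : Fin n, (inner ℝ (q ((i : ℕ) + 1)) (𝒜 (q ((j : ℕ) + 1))) : ℝ) * d j =
      if (i : ℕ) = n - 1 then 1 else 0) ∧
    v = ∑ j : Fin n, d j • q ((j : ℕ) + 1)

lemma inner_map_sum_smul {ι : Type*} (s : Finset ι) (𝒜 : Module.End ℝ X) (x : X)
    (c : ι → ℝ) (v : ι → X) :
    (inner ℝ x (𝒜 (∑ j ∈ s, c j • v j)) : ℝ) = ∑ j ∈ s, (inner ℝ x (𝒜 (v j)) : ℝ) * c j := by
  simp only [map_sum, map_smul, inner_sum, inner_smul_right, mul_comm]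

namespace IsLanczosDirection

variable {𝒜 : Module.End ℝ X} {q : ℕ → X}

lemma inner_map_eq_zero {n : ℕ} {v : X} (hv : IsLanczosDirection 𝒜 q n v) {i : ℕ}
    (hi : i + 1 < n) : (inner ℝ (q (i + 1)) (𝒜 v) : ℝ) = 0 := by
  obtain ⟨d, hd, rfl⟩ := hv
  rw [inner_map_sum_smul, hd ⟨i, by omega⟩, if_neg (by simp only; omega)]

lemma inner_map_eq_zero_of_lt {n k : ℕ} {v w : X} (hv : IsLanczosDirection 𝒜 q n v)
    (hw : IsLanczosDirection 𝒜 q k w) (hkn : k < n) : (inner ℝ (𝒜 v) w : ℝ) = 0 := by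
  obtain ⟨d, -, rfl⟩ := hw
  rw [inner_sum]
  refine sum_eq_zero fun j _ => ?_
  rw [inner_smul_right, real_inner_comm, hv.inner_map_eq_zero (by omega), mul_zero]

end IsLanczosDirection

end

theorem stmt_14_general {X : Type*} [NormedAddCommGroup X] [InnerProductSpace ℝ X]
    (𝒜 : Module.End ℝ X) (hsym : ∀ x y : X, (inner ℝ (𝒜 x) y : ℝ) = inner ℝ x (𝒜 y))
    (N : ℕ) (q : ℕ → X)
    (p : ℕ → X)
    (hp : ∀ n, 1 ≤ n → n ≤ N → ∃ dn : Fin n → ℝ,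
      (∀ i : Fin n, ∑ j : Fin n,
          (inner ℝ (q ((i : ℕ) + 1)) (𝒜 (q ((j : ℕ) + 1))) : ℝ) * dn j =
        if (i : ℕ) = n - 1 then 1 else 0) ∧
      p n = ∑ j : Fin n, dn j • q ((j : ℕ) + 1)) :
    ∀ n k, 1 ≤ n → n ≤ N → 1 ≤ k → k ≤ N → n ≠ k →
      (inner ℝ (𝒜 (p n)) (p k) : ℝ) = 0 := by
  intro n k hn1 hnN hk1 hkN hne
  have hpn : IsLanczosDirection 𝒜 q n (p n) := hp n hn1 hnN
  have hpk : IsLanczosDirection 𝒜 q k (p k) := hp k hk1 hkN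
  rcases hne.lt_or_gt with hnk | hkn
  · rw [hsym, real_inner_comm]
    exact hpk.inner_map_eq_zero_of_lt hpn hnk
  · exact hpn.inner_map_eq_zero_of_lt hpk hkn

/-- The search directions p_n = Q_n T_n⁻¹ e_n of the rational Lanczos
method (q₁,…,q_N an orthonormal basis of the space, T_n the n×n leading block of
⟨qᵢ,𝒜qⱼ⟩) satisfy the conjugacy relations ⟨𝒜p_n, p_k⟩ = 0 for n ≠ k. -/
theorem stmt_14 {X : Type*} [NormedAddCommGroup X] [InnerProductSpace ℝ X]
    [FiniteDimensional ℝ X]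
    (𝒜 : Module.End ℝ X) (hsym : ∀ x y : X, (inner ℝ (𝒜 x) y : ℝ) = inner ℝ x (𝒜 y))
    (hpd : ∀ x : X, x ≠ 0 → 0 < (inner ℝ (𝒜 x) x : ℝ))
    (N : ℕ) (q : ℕ → X)
    (hON : ∀ i j, 1 ≤ i → i ≤ N → 1 ≤ j → j ≤ N →
      (inner ℝ (q i) (q j) : ℝ) = if i = j then 1 else 0)
    (hspan : Submodule.span ℝ {v : X | ∃ i, 1 ≤ i ∧ i ≤ N ∧ v = q i} = ⊤)
    (p : ℕ → X)
    (hp : ∀ n, 1 ≤ n → n ≤ N → ∃ dn : Fin n → ℝ,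
      (∀ i : Fin n, ∑ j : Fin n,
          (inner ℝ (q ((i : ℕ) + 1)) (𝒜 (q ((j : ℕ) + 1))) : ℝ) * dn j =
        if (i : ℕ) = n - 1 then 1 else 0) ∧
      p n = ∑ j : Fin n, dn j • q ((j : ℕ) + 1)) :
    ∀ n k, 1 ≤ n → n ≤ N → 1 ≤ k → k ≤ N → n ≠ k →
      (inner ℝ (𝒜 (p n)) (p k) : ℝ) = 0 :=
  stmt_14_general 𝒜 hsym N q p hp
end

section
/- If T_n = Q_nᵀ𝒜Q_n and p_n = Q_n T_n⁻¹ e_n, then 𝒜p_n lies in q_n + span{q_j : j > n}; in particular ⟨q_j, 𝒜p_n⟩ = 0 for j < n and ⟨q_n, 𝒜p_n⟩ = 1. -/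
/-! Only the coordinates of `𝒜 p` along `q₁, …, qₙ` are prescribed by `T_n d = e_n`, and
they are exactly those of `qₙ`. So `𝒜 p - qₙ` is orthogonal to `span {q₁, …, qₙ}`, and since
the `q_j` are orthonormal and span the whole space, it lies in `span {q_{n+1}, …, q_N}`. -/

open Submodule
open scoped InnerProductSpace

theorem setOf_exists_Icc_eq_union {α : Type*} (q : ℕ → α) {a b c : ℕ} (hab : a ≤ b + 1)
    (hbc : b ≤ c) :
    {v | ∃ i, a ≤ i ∧ i ≤ c ∧ v = q i} =
      {v | ∃ i, a ≤ i ∧ i ≤ b ∧ v = q i} ∪ {v | ∃ i, b + 1 ≤ i ∧ i ≤ c ∧ v = q i} := by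
  ext v
  constructor
  · rintro ⟨i, hai, hic, rfl⟩
    by_cases hib : i ≤ b
    · exact Or.inl ⟨i, hai, hib, rfl⟩
    · exact Or.inr ⟨i, by omega, hic, rfl⟩
  · rintro (⟨i, hai, hib, rfl⟩ | ⟨i, hbi, hic, rfl⟩)
    · exact ⟨i, hai, by omega, rfl⟩
    · exact ⟨i, by omega, hic, rfl⟩

section

variable {𝕜 X : Type*} [RCLike 𝕜] [NormedAddCommGroup X] [InnerProductSpace 𝕜 X]

theorem Submodule.mem_orthogonal_span_iff {s : Set X} {v : X} :
    v ∈ (span 𝕜 s)ᗮ ↔ ∀ u ∈ s, ⟪u, v⟫_𝕜 = 0 := by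
  rw [← span_singleton_le_iff_mem, ← isOrtho_iff_le, isOrtho_comm, isOrtho_span]
  simp

theorem Submodule.IsOrtho.mem_of_mem_sup_of_mem_orthogonal {K L : Submodule 𝕜 X} (hKL : K ⟂ L)
    {v : X} (hv : v ∈ K ⊔ L) (hvK : v ∈ Kᗮ) : v ∈ L := by
  have hL : (L ⊔ K) ⊓ Kᗮ = L := by
    rw [sup_inf_assoc_of_le K hKL.symm, inf_orthogonal_eq_bot, sup_bot_eq]
  exact hL ▸ ⟨sup_comm K L ▸ hv, hvK⟩

theorem isOrtho_span_initial_final {N : ℕ} {q : ℕ → X}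
    (hON : ∀ i j, 1 ≤ i → i ≤ N → 1 ≤ j → j ≤ N → ⟪q i, q j⟫_𝕜 = if i = j then 1 else 0)
    {n : ℕ} (hnN : n ≤ N) :
    span 𝕜 {v | ∃ i, 1 ≤ i ∧ i ≤ n ∧ v = q i} ⟂
      span 𝕜 {v | ∃ j, n + 1 ≤ j ∧ j ≤ N ∧ v = q j} := by
  rw [isOrtho_span]
  rintro _ ⟨i, hi, hin, rfl⟩ _ ⟨j, hj, hjN, rfl⟩
  rw [hON i j hi (by omega) (by omega) hjN, if_neg (by omega)]

end

section

variable {X : Type*} [NormedAddCommGroup X] [InnerProductSpace ℝ X]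

/-- Reindexing `T_n d = e_n` from `Fin n` to `1, …, n`. -/
theorem inner_apply_sum_eq_ite (𝒜 : Module.End ℝ X) (q : ℕ → X) {n : ℕ} (d : Fin n → ℝ)
    (hd : ∀ i : Fin n, ∑ j : Fin n, ⟪q ((i : ℕ) + 1), 𝒜 (q ((j : ℕ) + 1))⟫_ℝ * d j =
      if (i : ℕ) = n - 1 then 1 else 0)
    {i : ℕ} (hi : 1 ≤ i) (hin : i ≤ n) :
    ⟪q i, 𝒜 (∑ j : Fin n, d j • q ((j : ℕ) + 1))⟫_ℝ = if i = n then 1 else 0 := by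
  obtain ⟨k, rfl⟩ : ∃ k, i = k + 1 := ⟨i - 1, by omega⟩
  simp only [map_sum, map_smul, inner_sum, real_inner_smul_right, mul_comm (d _)]
  rw [hd ⟨k, by omega⟩]
  exact if_congr (by dsimp only; omega) rfl rfl

end

theorem stmt_15_general {X : Type*} [NormedAddCommGroup X] [InnerProductSpace ℝ X]
    (𝒜 : Module.End ℝ X)
    (N : ℕ) (q : ℕ → X)
    (hON : ∀ i j, 1 ≤ i → i ≤ N → 1 ≤ j → j ≤ N →
      (inner ℝ (q i) (q j) : ℝ) = if i = j then 1 else 0)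
    (hspan : Submodule.span ℝ {v : X | ∃ i, 1 ≤ i ∧ i ≤ N ∧ v = q i} = ⊤)
    (n : ℕ) (hn : 1 ≤ n) (hnN : n ≤ N)
    (dn : Fin n → ℝ)
    (hdn : ∀ i : Fin n, ∑ j : Fin n,
        (inner ℝ (q ((i : ℕ) + 1)) (𝒜 (q ((j : ℕ) + 1))) : ℝ) * dn j =
      if (i : ℕ) = n - 1 then 1 else 0)
    (p : X) (hpdef : p = ∑ j : Fin n, dn j • q ((j : ℕ) + 1)) :
    𝒜 p - q n ∈ Submodule.span ℝ {v : X | ∃ j, n + 1 ≤ j ∧ j ≤ N ∧ v = q j} ∧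
    (∀ j, 1 ≤ j → j < n → (inner ℝ (q j) (𝒜 p) : ℝ) = 0) ∧
    (inner ℝ (q n) (𝒜 p) : ℝ) = 1 := by
  have hcoord : ∀ i, 1 ≤ i → i ≤ n → ⟪q i, 𝒜 p⟫_ℝ = if i = n then 1 else 0 :=
    fun i hi hin => hpdef ▸ inner_apply_sum_eq_ite 𝒜 q dn hdn hi hin
  refine ⟨?_, fun j hj hjn => by simpa [hjn.ne] using hcoord j hj hjn.le,
    by simpa using hcoord n hn le_rfl⟩
  refine (isOrtho_span_initial_final hON hnN).mem_of_mem_sup_of_mem_orthogonal ?_ ?_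
  · rw [← span_union, ← setOf_exists_Icc_eq_union q (by omega) hnN, hspan]
    exact mem_top
  · rw [mem_orthogonal_span_iff]
    rintro _ ⟨i, hi, hin, rfl⟩
    rw [inner_sub_right, hcoord i hi hin, hON i n hi (by omega) hn hnN, sub_self]

/-- If T_n = Q_nᵀ𝒜Q_n and p_n = Q_n T_n⁻¹ e_n (q₁,…,q_N an orthonormal
basis of the 𝒜-invariant space), then 𝒜p_n ∈ q_n + span{q_j : j > n}; in particular
⟨q_j, 𝒜p_n⟩ = 0 for j < n and ⟨q_n, 𝒜p_n⟩ = 1. -/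
theorem stmt_15 {X : Type*} [NormedAddCommGroup X] [InnerProductSpace ℝ X]
    [FiniteDimensional ℝ X]
    (𝒜 : Module.End ℝ X) (hsym : ∀ x y : X, (inner ℝ (𝒜 x) y : ℝ) = inner ℝ x (𝒜 y))
    (N : ℕ) (q : ℕ → X)
    (hON : ∀ i j, 1 ≤ i → i ≤ N → 1 ≤ j → j ≤ N →
      (inner ℝ (q i) (q j) : ℝ) = if i = j then 1 else 0)
    (hspan : Submodule.span ℝ {v : X | ∃ i, 1 ≤ i ∧ i ≤ N ∧ v = q i} = ⊤)
    (n : ℕ) (hn : 1 ≤ n) (hnN : n ≤ N)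
    (dn : Fin n → ℝ)
    (hdn : ∀ i : Fin n, ∑ j : Fin n,
        (inner ℝ (q ((i : ℕ) + 1)) (𝒜 (q ((j : ℕ) + 1))) : ℝ) * dn j =
      if (i : ℕ) = n - 1 then 1 else 0)
    (p : X) (hpdef : p = ∑ j : Fin n, dn j • q ((j : ℕ) + 1)) :
    𝒜 p - q n ∈ Submodule.span ℝ {v : X | ∃ j, n + 1 ≤ j ∧ j ≤ N ∧ v = q j} ∧
    (∀ j, 1 ≤ j → j < n → (inner ℝ (q j) (𝒜 p) : ℝ) = 0) ∧
    (inner ℝ (q n) (𝒜 p) : ℝ) = 1 :=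
  stmt_15_general 𝒜 N q hON hspan n hn hnN dn hdn p hpdef
end

section
/- In the rational Lanczos method, the residuals r_n = 𝒜x_n − b of the normal equations satisfy: r_n is orthogonal to the whole space 𝒦ℛⁿ; moreover ⟨rᵢ, rⱼ⟩ = 0 whenever |i−j| ≥ 2, and additionally ⟨r_n, r_{n+1}⟩ = 0 when n is even. -/
/-!
Write `T_{mj} = ⟪q_m, 𝒜 q_j⟫`. The Galerkin system `T_n c_n = ‖b‖ e₁` says exactly that `r_n` has
no component along `q_1, …, q_n`, while the band structure `T_{ml} = 0` for `m ≥ l + 2` says that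
`r_n` has no component along `q_m` for `m ≥ n + 2`. Hence for `i < j` every `q_m` is orthogonal to
`r_i` (when `m ≥ i + 2`) or to `r_j` (when `m ≤ j`), and Parseval's identity in the orthonormal
basis `q_1, …, q_N` gives `⟪r_i, r_j⟫ = 0`.
-/

open scoped RealInnerProductSpace

theorem range_Icc_eq {X : Type*} (N : ℕ) (q : ℕ → X) :
    Set.range (fun i : Finset.Icc 1 N => q i) = {v : X | ∃ i, 1 ≤ i ∧ i ≤ N ∧ v = q i} := by
  ext v
  simp [Finset.mem_Icc, eq_comm, and_assoc]

section

variable {X : Type*} [NormedAddCommGroup X] [InnerProductSpace ℝ X]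

theorem OrthonormalBasis.inner_eq_zero_of_forall {ι : Type*} [Fintype ι]
    (e : OrthonormalBasis ι ℝ X) {u w : X} (h : ∀ i, ⟪u, e i⟫ = 0 ∨ ⟪e i, w⟫ = 0) :
    ⟪u, w⟫ = 0 := by
  rw [← e.sum_inner_mul_inner u w]
  refine Finset.sum_eq_zero fun i _ => ?_
  rcases h i with h | h <;> simp [h]

theorem orthonormal_Icc {N : ℕ} {q : ℕ → X}
    (hON : ∀ i j, 1 ≤ i → i ≤ N → 1 ≤ j → j ≤ N → ⟪q i, q j⟫ = if i = j then 1 else 0) :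
    Orthonormal ℝ fun i : Finset.Icc 1 N => q i := by
  rw [orthonormal_iff_ite]
  rintro ⟨i, hi⟩ ⟨j, hj⟩
  rw [Finset.mem_Icc] at hi hj
  simp only [hON i j hi.1 hi.2 hj.1 hj.2, Subtype.mk.injEq]

variable (𝒜 : Module.End ℝ X) (q : ℕ → X)

theorem inner_apply_sum_smul {n : ℕ} (c : Fin n → ℝ) (m : ℕ) :
    ⟪q m, 𝒜 (∑ j : Fin n, c j • q (j + 1))⟫ = ∑ j : Fin n, ⟪q m, 𝒜 (q (j + 1))⟫ * c j := by
  simp [map_sum, inner_sum, real_inner_smul_right, mul_comm]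

variable {𝒜 q}

theorem inner_sub_eq_zero_of_galerkin {n : ℕ} {c : Fin n → ℝ} {b : X} {β : ℝ}
    (hc : ∀ i : Fin n, ∑ j : Fin n, ⟪q (i + 1), 𝒜 (q (j + 1))⟫ * c j =
      if (i : ℕ) = 0 then β else 0)
    (hb : ∀ j, 1 ≤ j → j ≤ n → ⟪q j, b⟫ = if j = 1 then β else 0)
    {j : ℕ} (hj₁ : 1 ≤ j) (hjn : j ≤ n) :
    ⟪q j, 𝒜 (∑ j : Fin n, c j • q (j + 1)) - b⟫ = 0 := by
  obtain ⟨i, rfl⟩ : ∃ i : Fin n, j = i + 1 := ⟨⟨j - 1, by omega⟩, by rw [Fin.val_mk]; omega⟩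
  rw [inner_sub_right, inner_apply_sum_smul, hc, hb _ hj₁ hjn]
  simp

theorem inner_sub_eq_zero_of_band {n m : ℕ} (c : Fin n → ℝ) {b : X}
    (hband : ∀ l, 1 ≤ l → l + 2 ≤ m → ⟪q m, 𝒜 (q l)⟫ = 0) (hb : ⟪q m, b⟫ = 0)
    (hm : n + 2 ≤ m) :
    ⟪q m, 𝒜 (∑ j : Fin n, c j • q (j + 1)) - b⟫ = 0 := by
  rw [inner_sub_right, inner_apply_sum_smul, hb, sub_zero]
  exact Finset.sum_eq_zero fun j _ => by rw [hband _ (by omega) (by omega), zero_mul]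

theorem inner_eq_ite_of_eq_inv_norm_smul {N : ℕ} {b : X}
    (hON : ∀ i j, 1 ≤ i → i ≤ N → 1 ≤ j → j ≤ N → ⟪q i, q j⟫ = if i = j then 1 else 0)
    (hq1 : q 1 = ‖b‖⁻¹ • b) {j : ℕ} (hj₁ : 1 ≤ j) (hjN : j ≤ N) :
    ⟪q j, b⟫ = if j = 1 then ‖b‖ else 0 := by
  have hb : b = ‖b‖ • q 1 := by
    rcases eq_or_ne b 0 with rfl | hb
    · simp
    · rw [hq1, smul_inv_smul₀ (norm_ne_zero_iff.mpr hb)]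
  calc ⟪q j, b⟫ = ‖b‖ * ⟪q j, q 1⟫ := by conv_lhs => rw [hb, real_inner_smul_right]
    _ = if j = 1 then ‖b‖ else 0 := by
      rw [hON j 1 hj₁ hjN le_rfl (by omega)]
      split_ifs <;> simp

theorem inner_apply_eq_zero_of_add_two_le {N : ℕ}
    (hpent1 : ∀ k m, 1 ≤ k → 2 * k ≤ N → 2 * k + 2 ≤ m → m ≤ N → ⟪q m, 𝒜 (q (2 * k))⟫ = 0)
    (hpent2 : ∀ k m, 2 * k + 1 ≤ N → 2 * k + 3 ≤ m → m ≤ N → ⟪q m, 𝒜 (q (2 * k + 1))⟫ = 0)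
    {l m : ℕ} (hl : 1 ≤ l) (hlm : l + 2 ≤ m) (hmN : m ≤ N) :
    ⟪q m, 𝒜 (q l)⟫ = 0 := by
  rcases Nat.even_or_odd' l with ⟨k, rfl | rfl⟩
  · exact hpent1 k m (by omega) (by omega) hlm hmN
  · exact hpent2 k m (by omega) hlm hmN

end

theorem stmt_16_general {X : Type*} [NormedAddCommGroup X] [InnerProductSpace ℝ X]
    (𝒜 : Module.End ℝ X)
    (b : X) (N : ℕ) (q : ℕ → X)
    (hq1 : q 1 = ‖b‖⁻¹ • b)
    (hON : ∀ i j, 1 ≤ i → i ≤ N → 1 ≤ j → j ≤ N →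
      (inner ℝ (q i) (q j) : ℝ) = if i = j then 1 else 0)
    (hspan : Submodule.span ℝ {v : X | ∃ i, 1 ≤ i ∧ i ≤ N ∧ v = q i} = ⊤)
    (hpent1 : ∀ k m, 1 ≤ k → 2 * k ≤ N → 2 * k + 2 ≤ m → m ≤ N →
      (inner ℝ (q m) (𝒜 (q (2 * k))) : ℝ) = 0)
    (hpent2 : ∀ k m, 2 * k + 1 ≤ N → 2 * k + 3 ≤ m → m ≤ N →
      (inner ℝ (q m) (𝒜 (q (2 * k + 1))) : ℝ) = 0)
    (x : ℕ → X)
    (hx : ∀ n, 1 ≤ n → n ≤ N → ∃ cn : Fin n → ℝ,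
      (∀ i : Fin n, ∑ j : Fin n,
          (inner ℝ (q ((i : ℕ) + 1)) (𝒜 (q ((j : ℕ) + 1))) : ℝ) * cn j =
        if (i : ℕ) = 0 then ‖b‖ else 0) ∧
      x n = ∑ j : Fin n, cn j • q ((j : ℕ) + 1))
    (r : ℕ → X) (hr : ∀ n, r n = 𝒜 (x n) - b) :
    (∀ n, 1 ≤ n → n ≤ N → ∀ j, 1 ≤ j → j ≤ n → (inner ℝ (r n) (q j) : ℝ) = 0) ∧
    (∀ i j, 1 ≤ i → i ≤ N → 1 ≤ j → j ≤ N → i + 2 ≤ j →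
      (inner ℝ (r i) (r j) : ℝ) = 0) ∧
    (∀ n, Even n → 1 ≤ n → n + 1 ≤ N → (inner ℝ (r n) (r (n + 1)) : ℝ) = 0) := by
  have hbq : ∀ j, 1 ≤ j → j ≤ N → ⟪q j, b⟫ = if j = 1 then ‖b‖ else 0 :=
    fun _ => inner_eq_ite_of_eq_inv_norm_smul hON hq1
  have galerkin : ∀ n, 1 ≤ n → n ≤ N → ∀ j, 1 ≤ j → j ≤ n → ⟪q j, r n⟫ = 0 := by
    intro n hn₁ hnN j hj₁ hjn
    obtain ⟨c, hc, hxn⟩ := hx n hn₁ hnN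
    rw [hr, hxn]
    exact inner_sub_eq_zero_of_galerkin hc (fun j hj₁ hjn => hbq j hj₁ (hjn.trans hnN)) hj₁ hjn
  have tail : ∀ n, 1 ≤ n → n ≤ N → ∀ m, n + 2 ≤ m → m ≤ N → ⟪q m, r n⟫ = 0 := by
    intro n hn₁ hnN m hm hmN
    obtain ⟨c, -, hxn⟩ := hx n hn₁ hnN
    rw [hr, hxn]
    refine inner_sub_eq_zero_of_band c
      (fun l hl hlm => inner_apply_eq_zero_of_add_two_le hpent1 hpent2 hl hlm hmN) ?_ hm
    rw [hbq m (by omega) hmN, if_neg (by omega)]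
  let e := OrthonormalBasis.mk (orthonormal_Icc hON) (by rw [range_Icc_eq, hspan])
  have orth : ∀ i j, 1 ≤ i → i ≤ N → 1 ≤ j → j ≤ N → i < j → ⟪r i, r j⟫ = 0 := by
    intro i j hi₁ hiN hj₁ hjN hij
    refine e.inner_eq_zero_of_forall fun ⟨m, hm⟩ => ?_
    rw [OrthonormalBasis.coe_mk, real_inner_comm]
    rw [Finset.mem_Icc] at hm
    by_cases hmj : m ≤ j
    · exact .inr (galerkin j hj₁ hjN m hm.1 hmj)
    · exact .inl (tail i hi₁ hiN m (by omega) hm.2)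
  refine ⟨fun n hn₁ hnN j hj₁ hjn => ?_, fun i j hi₁ hiN hj₁ hjN hij => ?_,
    fun n _ hn₁ hnN => orth n (n + 1) hn₁ (by omega) (by omega) hnN n.lt_succ_self⟩
  · rw [real_inner_comm]
    exact galerkin n hn₁ hnN j hj₁ hjn
  · exact orth i j hi₁ hiN hj₁ hjN (by omega)

/-- In the rational Lanczos method (q₁,…,q_N orthonormal basis from the
mixed rational Arnoldi process, with pentadiagonal T_{ij}=⟨qᵢ,𝒜qⱼ⟩ and iterates
x_n = Q_n c_n, T_n c_n = ‖b‖e₁), the residuals r_n = 𝒜x_n − b of the normal equations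
satisfy: r_n ⟂ 𝒦ℛⁿ = span{q₁,…,q_n}; ⟨rᵢ,rⱼ⟩ = 0 whenever |i−j| ≥ 2; and
⟨r_n, r_{n+1}⟩ = 0 when n is even (a rational step). -/
theorem stmt_16 {X : Type*} [NormedAddCommGroup X] [InnerProductSpace ℝ X]
    [FiniteDimensional ℝ X]
    (𝒜 : Module.End ℝ X) (hsym : ∀ x y : X, (inner ℝ (𝒜 x) y : ℝ) = inner ℝ x (𝒜 y))
    (hpsd : ∀ x : X, 0 ≤ (inner ℝ (𝒜 x) x : ℝ))
    (b : X) (hb : b ≠ 0) (N : ℕ) (q : ℕ → X)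
    (hq1 : q 1 = ‖b‖⁻¹ • b)
    (hON : ∀ i j, 1 ≤ i → i ≤ N → 1 ≤ j → j ≤ N →
      (inner ℝ (q i) (q j) : ℝ) = if i = j then 1 else 0)
    (hspan : Submodule.span ℝ {v : X | ∃ i, 1 ≤ i ∧ i ≤ N ∧ v = q i} = ⊤)
    (hpent1 : ∀ k m, 1 ≤ k → 2 * k ≤ N → 2 * k + 2 ≤ m → m ≤ N →
      (inner ℝ (q m) (𝒜 (q (2 * k))) : ℝ) = 0)
    (hpent2 : ∀ k m, 2 * k + 1 ≤ N → 2 * k + 3 ≤ m → m ≤ N →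
      (inner ℝ (q m) (𝒜 (q (2 * k + 1))) : ℝ) = 0)
    (x : ℕ → X)
    (hx : ∀ n, 1 ≤ n → n ≤ N → ∃ cn : Fin n → ℝ,
      (∀ i : Fin n, ∑ j : Fin n,
          (inner ℝ (q ((i : ℕ) + 1)) (𝒜 (q ((j : ℕ) + 1))) : ℝ) * cn j =
        if (i : ℕ) = 0 then ‖b‖ else 0) ∧
      x n = ∑ j : Fin n, cn j • q ((j : ℕ) + 1))
    (r : ℕ → X) (hr : ∀ n, r n = 𝒜 (x n) - b) :
    (∀ n, 1 ≤ n → n ≤ N → ∀ j, 1 ≤ j → j ≤ n → (inner ℝ (r n) (q j) : ℝ) = 0) ∧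
    (∀ i j, 1 ≤ i → i ≤ N → 1 ≤ j → j ≤ N → i + 2 ≤ j →
      (inner ℝ (r i) (r j) : ℝ) = 0) ∧
    (∀ n, Even n → 1 ≤ n → n + 1 ≤ N → (inner ℝ (r n) (r (n + 1)) : ℝ) = 0) :=
  stmt_16_general 𝒜 b N q hq1 hON hspan hpent1 hpent2 x hx r hr
end

section
/- In a rational step of the rational CG method, defining p_n = (𝒜+α_kI)⁻¹(ρ_n p_{n−1} + r_{n−1}) with ρ_n = α_k⟨(𝒜+α_kI)⁻¹p_{n−1}, r_{n−1}⟩ / ⟨𝒜p_{n−1}, (𝒜+α_kI)⁻¹p_{n−1}⟩, and assuming ⟨r_{n−1}, p_{n−1}⟩ = 0, one has ⟨𝒜p_n, p_{n−1}⟩ = 0; moreover ρ_n also equals −⟨𝒜p_{n−1}, (𝒜+α_kI)⁻¹r_{n−1}⟩ / ⟨𝒜p_{n−1}, (𝒜+α_kI)⁻¹p_{n−1}⟩. -/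
/-!
Write `B = 𝒜 + α I`, so that `s = B⁻¹ p` and `t = B⁻¹ r`. Symmetry of `B` gives
`⟨s, r⟩ = ⟨s, B t⟩ = ⟨B s, t⟩ = ⟨p, t⟩`, and symmetry of `𝒜` together with `𝒜 t = r - α t` gives
`⟨𝒜 p, t⟩ = ⟨p, r⟩ - α ⟨p, t⟩ = -α ⟨s, r⟩` once `⟨r, p⟩ = 0`. This is the second formula for `ρ`,
and with it `ρ s + t` is the `𝒜`-orthogonalisation of `t` against `p` along `s`.
-/

open scoped InnerProductSpace

namespace LinearMap.IsSymmetric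

variable {E : Type*} [NormedAddCommGroup E] [InnerProductSpace ℝ E] {T : E →ₗ[ℝ] E}

theorem inner_apply_eq_of_shift_apply (hT : T.IsSymmetric) {α : ℝ} {p r s t : E}
    (hs : (T + α • 1) s = p) (ht : (T + α • 1) t = r) :
    ⟪T p, t⟫_ℝ = ⟪p, r⟫_ℝ - α * ⟪s, r⟫_ℝ := by
  have hshift : (T + α • 1).IsSymmetric := hT.add (IsSymmetric.one.smul (conj_trivial α))
  have hpt : ⟪p, t⟫_ℝ = ⟪s, r⟫_ℝ := by rw [← hs, ← ht, hshift s t]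
  have hTt : T t = r - α • t := by
    rw [← ht, add_apply, smul_apply, Module.End.one_apply, add_sub_cancel_right]
  rw [hT p t, hTt, inner_sub_right, real_inner_smul_right, hpt]

theorem inner_apply_neg_div_smul_add_eq_zero (hT : T.IsSymmetric) {p s t : E}
    (hps : ⟪T p, s⟫_ℝ ≠ 0) :
    ⟪T ((-⟪T p, t⟫_ℝ / ⟪T p, s⟫_ℝ) • s + t), p⟫_ℝ = 0 := by
  rw [hT, inner_add_left, real_inner_smul_left, real_inner_comm (T p), real_inner_comm (T p),
    div_mul_cancel₀ _ hps, neg_add_cancel]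

end LinearMap.IsSymmetric

theorem stmt_17_general {X : Type*} [NormedAddCommGroup X] [InnerProductSpace ℝ X]
    (𝒜 : Module.End ℝ X) (hsym : ∀ x y : X, (inner ℝ (𝒜 x) y : ℝ) = inner ℝ x (𝒜 y))
    (αk : ℝ)
    (pPrev rPrev s t : X)
    (hs : (𝒜 + αk • (1 : Module.End ℝ X)) s = pPrev)
    (ht : (𝒜 + αk • (1 : Module.End ℝ X)) t = rPrev)
    (horth : (inner ℝ rPrev pPrev : ℝ) = 0)
    (hden : (inner ℝ (𝒜 pPrev) s : ℝ) ≠ 0)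
    (ρ : ℝ) (hρ : ρ = αk * (inner ℝ s rPrev : ℝ) / (inner ℝ (𝒜 pPrev) s : ℝ))
    (pn : X) (hpn : pn = ρ • s + t) :
    (inner ℝ (𝒜 pn) pPrev : ℝ) = 0 ∧
    ρ = -(inner ℝ (𝒜 pPrev) t : ℝ) / (inner ℝ (𝒜 pPrev) s : ℝ) := by
  have hρ' : ρ = -⟪𝒜 pPrev, t⟫_ℝ / ⟪𝒜 pPrev, s⟫_ℝ := by
    rw [hρ, LinearMap.IsSymmetric.inner_apply_eq_of_shift_apply hsym hs ht,
      real_inner_comm rPrev pPrev, horth]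
    ring
  refine ⟨?_, hρ'⟩
  rw [hpn, hρ']
  exact LinearMap.IsSymmetric.inner_apply_neg_div_smul_add_eq_zero hsym hden

/-- In a rational step of the rational CG method, with
s = (𝒜+α_kI)⁻¹p_{n−1}, t = (𝒜+α_kI)⁻¹r_{n−1},
ρ = α_k⟨s, r_{n−1}⟩/⟨𝒜p_{n−1}, s⟩ and p_n = (𝒜+α_kI)⁻¹(ρp_{n−1} + r_{n−1}) = ρs + t,
assuming ⟨r_{n−1}, p_{n−1}⟩ = 0 one has ⟨𝒜p_n, p_{n−1}⟩ = 0; moreover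
ρ = −⟨𝒜p_{n−1}, t⟩/⟨𝒜p_{n−1}, s⟩. -/
theorem stmt_17 {X : Type*} [NormedAddCommGroup X] [InnerProductSpace ℝ X]
    [FiniteDimensional ℝ X]
    (𝒜 : Module.End ℝ X) (hsym : ∀ x y : X, (inner ℝ (𝒜 x) y : ℝ) = inner ℝ x (𝒜 y))
    (hpsd : ∀ x : X, 0 ≤ (inner ℝ (𝒜 x) x : ℝ))
    (αk : ℝ) (hαk : 0 < αk)
    (hbij : Function.Bijective (𝒜 + αk • (1 : Module.End ℝ X)))
    (pPrev rPrev s t : X)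
    (hs : (𝒜 + αk • (1 : Module.End ℝ X)) s = pPrev)
    (ht : (𝒜 + αk • (1 : Module.End ℝ X)) t = rPrev)
    (horth : (inner ℝ rPrev pPrev : ℝ) = 0)
    (hden : (inner ℝ (𝒜 pPrev) s : ℝ) ≠ 0)
    (ρ : ℝ) (hρ : ρ = αk * (inner ℝ s rPrev : ℝ) / (inner ℝ (𝒜 pPrev) s : ℝ))
    (pn : X) (hpn : pn = ρ • s + t) :
    (inner ℝ (𝒜 pn) pPrev : ℝ) = 0 ∧
    ρ = -(inner ℝ (𝒜 pPrev) t : ℝ) / (inner ℝ (𝒜 pPrev) s : ℝ) :=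
  stmt_17_general 𝒜 hsym αk pPrev rPrev s t hs ht horth hden ρ hρ pn hpn
end
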